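/- The arboricity of the complete graph K_k on k vertices equals ⌈k/2⌉. -/

import Mathlib

/-!
A forest on `k` vertices has at most `k - 1` edges, so covering the `k(k-1)/2` edges of `K_k`
takes at least `k/2` forests. Conversely, `K_k` is the union of `⌈k/2⌉` double stars, the `i`-th
one with centres `2i` and `2i + 1`.
-/

open SimpleGraph
open scoped Finset

noncomputable def arboricity {V : Type*} (G : SimpleGraph V) : ℕ :=
  sInf {n | ∃ f : Fin n → SimpleGraph V,
    (∀ i, (f i).IsAcyclic) ∧ (∀ i, f i ≤ G) ∧
    ∀ e ∈ G.edgeSet, ∃ i, e ∈ (f i).edgeSet}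

namespace SimpleGraph

variable {V : Type*} {G : SimpleGraph V}

/-- A vertex of maximal height on a cycle would have two distinct lower neighbours on it. -/
theorem isAcyclic_of_height {α : Type*} [LinearOrder α] (r : V → α)
    (hne : ∀ u v, G.Adj u v → r u ≠ r v)
    (hlower : ∀ v u w, G.Adj v u → G.Adj v w → r u < r v → r w < r v → u = w) :
    G.IsAcyclic := by
  classical
  intro v c hc
  obtain ⟨w, hw, hmax⟩ := c.support.toFinset.exists_max_image r ⟨v, by simp⟩
  rw [List.mem_toFinset] at hw
  set c' := c.rotate w hw
  have hc' : c'.IsCycle := hc.rotate hw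
  have hlt : ∀ u, G.Adj w u → u ∈ c'.support → r u < r w := fun u hu hmem =>
    lt_of_le_of_ne (hmax u (by simpa [c'] using hmem)) (hne w u hu).symm
  refine hc'.snd_ne_penultimate (hlower w _ _ (c'.adj_snd hc'.not_nil)
    (c'.adj_penultimate hc'.not_nil).symm ?_ ?_)
  · exact hlt _ (c'.adj_snd hc'.not_nil) (c'.getVert_mem_support 1)
  · exact hlt _ (c'.adj_penultimate hc'.not_nil).symm (c'.getVert_mem_support _)

theorem IsAcyclic.card_edgeFinset_add_one_le [Fintype V] [Nonempty V] [Fintype G.edgeSet]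
    (hG : G.IsAcyclic) : #G.edgeFinset + 1 ≤ Fintype.card V := by
  classical
  obtain ⟨T, hGT, -, hT⟩ := connected_top.exists_isTree_le_of_le_of_isAcyclic le_top hG
  rw [← hT.card_edgeFinset]
  gcongr

def IsForestCover {n : ℕ} (G : SimpleGraph V) (f : Fin n → SimpleGraph V) : Prop :=
  (∀ i, (f i).IsAcyclic) ∧ (∀ i, f i ≤ G) ∧ ∀ e ∈ G.edgeSet, ∃ i, e ∈ (f i).edgeSet

theorem arboricity_le {n : ℕ} {f : Fin n → SimpleGraph V} (hf : G.IsForestCover f) :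
    arboricity G ≤ n :=
  Nat.sInf_le ⟨f, hf⟩

theorem exists_isForestCover_arboricity {n : ℕ} {f : Fin n → SimpleGraph V}
    (hf : G.IsForestCover f) : ∃ g : Fin (arboricity G) → SimpleGraph V, G.IsForestCover g :=
  Nat.sInf_mem (s := {n | ∃ f : Fin n → SimpleGraph V, G.IsForestCover f}) ⟨n, f, hf⟩

theorem IsForestCover.card_edgeFinset_le [Fintype V] [Nonempty V] [DecidableRel G.Adj] {n : ℕ}
    {f : Fin n → SimpleGraph V} (hf : G.IsForestCover f) :
    #G.edgeFinset ≤ n * (Fintype.card V - 1) := by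
  classical
  have hsub : G.edgeFinset ⊆ Finset.univ.biUnion fun i => (f i).edgeFinset := by
    intro e he
    obtain ⟨i, hi⟩ := hf.2.2 e (mem_edgeFinset.mp he)
    exact Finset.mem_biUnion.mpr ⟨i, Finset.mem_univ i, mem_edgeFinset.mpr hi⟩
  have hforest : ∀ i, #(f i).edgeFinset ≤ Fintype.card V - 1 := fun i => by
    have := (hf.1 i).card_edgeFinset_add_one_le
    omega
  calc #G.edgeFinset ≤ #(Finset.univ.biUnion fun i => (f i).edgeFinset) :=
        Finset.card_le_card hsub
    _ ≤ ∑ i, #(f i).edgeFinset := Finset.card_biUnion_le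
    _ ≤ ∑ _i : Fin n, (Fintype.card V - 1) := Finset.sum_le_sum fun i _ => hforest i
    _ = n * (Fintype.card V - 1) := by simp

end SimpleGraph

/-- Edge `{a, b}` of the complete graph on `ℕ` goes to forest `pairIndex a b`; forest `i` is then
the double star with adjacent centres `2i` and `2i + 1`, where `2i` is joined to the larger even
and the smaller odd vertices and `2i + 1` to the larger odd and the smaller even ones. -/
def pairIndex (a b : ℕ) : ℕ := if a % 2 = b % 2 then min a b / 2 else max a b / 2

theorem pairIndex_comm (a b : ℕ) : pairIndex a b = pairIndex b a := by
  unfold pairIndex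
  split_ifs <;> omega

theorem pairIndex_lt {k a b : ℕ} (ha : a < k) (hb : b < k) :
    pairIndex a b < (k + 1) / 2 := by
  unfold pairIndex
  split_ifs <;> omega

def doubleStar (i : ℕ) : SimpleGraph ℕ where
  Adj a b := a ≠ b ∧ pairIndex a b = i
  symm := ⟨fun _ _ h => ⟨h.1.symm, pairIndex_comm _ _ ▸ h.2⟩⟩
  loopless := ⟨fun _ h => h.1 rfl⟩

theorem isAcyclic_doubleStar (i : ℕ) : (doubleStar i).IsAcyclic := by
  apply isAcyclic_of_height fun v => if v = 2 * i then 0 else if v = 2 * i + 1 then 1 else 2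
  · rintro u v ⟨huv, hidx⟩
    unfold pairIndex at hidx
    split_ifs at hidx ⊢ <;> omega
  · rintro v u w ⟨hvu, hu⟩ ⟨hvw, hw⟩ hru hrw
    unfold pairIndex at hu hw
    split_ifs at hu hw hru hrw <;> omega

theorem isForestCover_doubleStar (k : ℕ) :
    (⊤ : SimpleGraph (Fin k)).IsForestCover
      fun i : Fin ((k + 1) / 2) => (doubleStar i).comap Fin.val := by
  refine ⟨fun i => (isAcyclic_doubleStar i).of_comap Fin.valEmbedding, fun _ => le_top, ?_⟩
  rintro ⟨u, v⟩ huv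
  exact ⟨⟨pairIndex u v, pairIndex_lt u.isLt v.isLt⟩, Fin.val_ne_of_ne huv, rfl⟩

/-- The arboricity of the complete graph on `k ≥ 2` vertices is `⌈k/2⌉`. -/
theorem arboricity_completeGraph (k : ℕ) (hk : 2 ≤ k) :
    arboricity (⊤ : SimpleGraph (Fin k)) = ⌈(k : ℚ) / 2⌉ := by
  have hcover := isForestCover_doubleStar k
  have hupper : arboricity (⊤ : SimpleGraph (Fin k)) ≤ (k + 1) / 2 := arboricity_le hcover
  have hedges : k * (k - 1) ≤ arboricity (⊤ : SimpleGraph (Fin k)) * 2 * (k - 1) := by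
    obtain ⟨g, hg⟩ := exists_isForestCover_arboricity hcover
    have : Nonempty (Fin k) := ⟨⟨0, by omega⟩⟩
    have := hg.card_edgeFinset_le
    rwa [card_edgeFinset_top_eq_card_choose_two, Fintype.card_fin, Nat.choose_two_right,
      Nat.div_le_iff_le_mul_of_dvd two_ne_zero (Nat.even_mul_pred_self k).two_dvd,
      mul_right_comm] at this
  have hlower : k ≤ arboricity (⊤ : SimpleGraph (Fin k)) * 2 :=
    Nat.le_of_mul_le_mul_right hedges (by omega)
  have hceil := Rat.ceil_natCast_div_natCast k 2
  push_cast at hceil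
  omega
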